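/- arXiv:math/0507019 — 5 statements merged into one kernel-verified Lean document; each statement's English description precedes it below -/
import Mathlib

section
/- Let k > r ≥ 2 be integers. If j_{k,r} = 0 (equivalently, gcd(k, #r) = 1), then w_2(k;r) = rk. -/
/-- `vdwProp r k n` says: every coloring `χ` of `{1,...,n}` with colors `0,...,r-1`
admits, for some color `i < r`, a `k i`-term arithmetic progression
`a, a+d, ..., a+(k i - 1)d` (with `a ≥ 1`, `d ≥ 1`) contained in `{1,...,n}`,
all of whose elements have color `i`. -/
def vdwProp (r : ℕ) (k : ℕ → ℕ) (n : ℕ) : Prop :=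
  ∀ χ : ℕ → ℕ, (∀ x, 1 ≤ x → x ≤ n → χ x < r) →
    ∃ i < r, ∃ a, 1 ≤ a ∧ ∃ d, 1 ≤ d ∧ a + (k i - 1) * d ≤ n ∧
      ∀ t < k i, χ (a + t * d) = i

/-- The length function for `w₂(k;r) = w(k,2,2,...,2;r)`: color `0` must avoid
`k`-term APs, every other color must avoid `2`-term APs. -/
def twoColors (k : ℕ) : ℕ → ℕ := fun i => if i = 0 then k else 2

/-- `#r`: the product of all primes not exceeding `r`. -/
def primorialUpTo (r : ℕ) : ℕ := ∏ p ∈ Finset.filter Nat.Prime (Finset.range (r + 1)), p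

/-- `j_{k,r} = min { j ≥ 0 : gcd(k - j, #r) = 1 }`. -/
noncomputable def jkr (k r : ℕ) : ℕ := sInf {j : ℕ | Nat.gcd (k - j) (primorialUpTo r) = 1}

/-- `ℓ_{k,r} = min { ℓ ≥ 0 : gcd(k - ℓ, #r) = r }`. -/
noncomputable def lkr (k r : ℕ) : ℕ := sInf {l : ℕ | Nat.gcd (k - l) (primorialUpTo r) = r}

lemma prime_dvd_primorial {p r : ℕ} (hp : p.Prime) (hpr : p ≤ r) : p ∣ primorialUpTo r := by
  apply Finset.dvd_prod_of_mem
  simp [Finset.mem_filter, Finset.mem_range, hp, Nat.lt_succ_of_le hpr]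

lemma coprime_of_le {d k r : ℕ} (h1 : 1 ≤ d) (hdr : d ≤ r)
    (hg : Nat.gcd k (primorialUpTo r) = 1) : Nat.Coprime d k := by
  rw [Nat.coprime_comm]
  by_contra hc
  obtain ⟨p, hp, hpk, hpd⟩ := Nat.Prime.not_coprime_iff_dvd.mp hc
  have hpr : p ≤ r := le_trans (Nat.le_of_dvd h1 hpd) hdr
  have : p ∣ 1 := hg ▸ Nat.dvd_gcd hpk (prime_dvd_primorial hp hpr)
  have h2 := Nat.le_of_dvd one_pos this
  have := hp.two_le
  omega

lemma exists_dvd_term {k d : ℕ} (hk : 2 ≤ k) (hco : Nat.Coprime d k) (a : ℕ) :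
    ∃ t < k, k ∣ a + t * d := by
  haveI : NeZero k := ⟨by omega⟩
  set u : ZMod k := (-(a : ZMod k)) * (d : ZMod k)⁻¹ with hu
  refine ⟨u.val, u.val_lt, ?_⟩
  have hunit : IsUnit (d : ZMod k) := (ZMod.isUnit_iff_coprime d k).mpr hco
  rw [← ZMod.natCast_eq_zero_iff]
  push_cast
  rw [ZMod.natCast_zmod_val, hu, mul_assoc, ZMod.inv_mul_of_unit _ hunit]
  ring

-- upper bound
lemma upper (k r : ℕ) (hr : 2 ≤ r) (hk : r < k) : vdwProp r (twoColors k) (r * k) := by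
  intro χ hχ
  by_cases hcase : ∃ x y, 1 ≤ x ∧ x < y ∧ y ≤ r * k ∧ χ x = χ y ∧ χ x ≠ 0
  · obtain ⟨x, y, hx1, hxy, hy, heq, hne⟩ := hcase
    refine ⟨χ x, hχ x hx1 (by omega), x, hx1, y - x, by omega, ?_, ?_⟩
    · simp only [twoColors, if_neg hne]
      omega
    · intro t ht
      simp only [twoColors, if_neg hne] at ht
      interval_cases t
      · simp
      · rw [one_mul]
        rw [show x + (y - x) = y by omega]
        exact heq.symm
  · -- each color ≥ 1 used at most once; find a fully-0-colored class
    have hclass : ∃ s, 1 ≤ s ∧ s ≤ r ∧ ∀ t < k, χ (s + t * r) = 0 := by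
      by_contra hno
      push_neg at hno
      have h2 : ∀ s, ∃ t, 1 ≤ s → s ≤ r → t < k ∧ χ (s + t * r) ≠ 0 := by
        intro s
        by_cases hs : 1 ≤ s ∧ s ≤ r
        · obtain ⟨t, ht, hne⟩ := hno s hs.1 hs.2
          exact ⟨t, fun _ _ => ⟨ht, hne⟩⟩
        · exact ⟨0, fun h1 h2 => absurd ⟨h1, h2⟩ hs⟩
      choose t ht using h2
      have hmaps : ∀ s ∈ Finset.Icc 1 r, χ (s + t s * r) ∈ Finset.Icc 1 (r - 1) := by
        intro s hs
        rw [Finset.mem_Icc] at hs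
        obtain ⟨htk, hne⟩ := ht s hs.1 hs.2
        have hle : s + t s * r ≤ r * k := by nlinarith
        have := hχ (s + t s * r) (by omega) hle
        rw [Finset.mem_Icc]
        omega
      have hcard : (Finset.Icc 1 (r - 1)).card < (Finset.Icc 1 r).card := by
        simp [Nat.card_Icc]; omega
      obtain ⟨s₁, hs₁, s₂, hs₂, hne, heq⟩ :=
        Finset.exists_ne_map_eq_of_card_lt_of_maps_to hcard hmaps
      rw [Finset.mem_Icc] at hs₁ hs₂
      obtain ⟨h₁k, h₁ne⟩ := ht s₁ hs₁.1 hs₁.2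
      obtain ⟨h₂k, h₂ne⟩ := ht s₂ hs₂.1 hs₂.2
      set x₁ := s₁ + t s₁ * r with hx₁
      set x₂ := s₂ + t s₂ * r with hx₂
      have hxne : x₁ ≠ x₂ := by
        intro hxeq
        rw [hx₁, hx₂] at hxeq
        apply hne
        rcases Nat.lt_trichotomy (t s₁) (t s₂) with h | h | h
        · have h' := mul_le_mul_left (show t s₁ + 1 ≤ t s₂ by omega) r
          rw [add_one_mul] at h'
          omega
        · rw [h] at hxeq; omega
        · have h' := mul_le_mul_left (show t s₂ + 1 ≤ t s₁ by omega) r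
          rw [add_one_mul] at h'
          omega
      have hle₁ : x₁ ≤ r * k := by rw [hx₁]; nlinarith [hs₁.1, hs₁.2]
      have hle₂ : x₂ ≤ r * k := by rw [hx₂]; nlinarith [hs₂.1, hs₂.2]
      rcases Nat.lt_or_ge x₁ x₂ with h | h
      · exact hcase ⟨x₁, x₂, by omega, h, hle₂, heq, h₁ne⟩
      · exact hcase ⟨x₂, x₁, by omega, by omega, hle₁, heq.symm, h₂ne⟩
    obtain ⟨s, hs1, hsr, hall⟩ := hclass
    have htc : twoColors k 0 = k := by simp [twoColors]
    refine ⟨0, by omega, s, hs1, r, by omega, ?_, ?_⟩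
    · rw [htc]
      have hmul : (k - 1) * r + r = k * r := by
        cases k with
        | zero => omega
        | succ m => simp [Nat.succ_sub_one, Nat.succ_mul]
      have hcomm : k * r = r * k := Nat.mul_comm k r
      omega
    · intro u hu
      rw [htc] at hu
      exact hall u hu

/-- Part I: if `j_{k,r} = 0` (i.e. `gcd(k, #r) = 1`), then `w₂(k;r) = rk`. -/
theorem w2_eq_of_j_eq_zero (k r : ℕ) (hr : 2 ≤ r) (hk : r < k)
    (hj : jkr k r = 0) :
    IsLeast {n : ℕ | 0 < n ∧ vdwProp r (twoColors k) n} (r * k) := by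
  have hgcd : Nat.gcd k (primorialUpTo r) = 1 := by
    rcases Nat.sInf_eq_zero.mp hj with h | h
    · simpa using h
    · exfalso
      have : (k - (k - 1)) = 1 := by omega
      have hmem : (k - 1) ∈ {j : ℕ | Nat.gcd (k - j) (primorialUpTo r) = 1} := by
        simp [Set.mem_setOf_eq, this]
      rw [h] at hmem
      exact hmem
  constructor
  · exact ⟨Nat.mul_pos (by omega) (by omega), upper k r hr hk⟩
  · rintro n ⟨hn, hvdw⟩
    by_contra hlt
    push_neg at hlt
    set χ : ℕ → ℕ := fun x => if x % k = 0 then x / k else 0 with hχdef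
    have hχ : ∀ x, 1 ≤ x → x ≤ n → χ x < r := by
      intro x hx1 hxn
      simp only [hχdef]
      split
      · have hcomm := Nat.mul_comm k r
        exact Nat.div_lt_of_lt_mul (by omega)
      · omega
    obtain ⟨i, hir, a, ha, d, hd, hbound, hAP⟩ := hvdw χ hχ
    by_cases hi : i = 0
    · subst hi
      have htc : twoColors k 0 = k := by simp [twoColors]
      rw [htc] at hbound hAP
      -- d ≤ r
      have hdr : d ≤ r := by
        by_contra hc
        push_neg at hc
        obtain ⟨m, rfl⟩ : ∃ m, k = m + 1 := ⟨k - 1, by omega⟩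
        simp only [Nat.add_sub_cancel] at hbound
        have h1 : m * (r + 1) ≤ m * d := Nat.mul_le_mul_left m (by omega)
        have h2 : m * (r + 1) = m * r + m := by ring
        have h3 : r * (m + 1) = m * r + r := by ring
        omega
      have hco : Nat.Coprime d k := coprime_of_le hd hdr hgcd
      obtain ⟨t, htk, hdvd⟩ := exists_dvd_term (by omega) hco a
      have h0 := hAP t htk
      simp only [hχdef] at h0
      obtain ⟨c, hc⟩ := hdvd
      have hm : (a + t * d) % k = 0 := by rw [hc]; exact Nat.mul_mod_right k c
      rw [if_pos hm] at h0
      have hge : a + t * d ≥ k := by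
        rcases Nat.eq_zero_or_pos c with h | h
        · subst h; simp at hc; omega
        · calc k = k * 1 := (mul_one k).symm
            _ ≤ k * c := Nat.mul_le_mul_left k h
            _ = a + t * d := hc.symm
      have : (a + t * d) / k ≥ 1 := Nat.one_le_div_iff (by omega) |>.mpr hge
      omega
    · have htc : twoColors k i = 2 := by simp [twoColors, hi]
      rw [htc] at hbound hAP
      have h0 := hAP 0 (by omega)
      have h1 := hAP 1 (by omega)
      simp only [hχdef, zero_mul, add_zero, one_mul] at h0 h1
      have ha0 : a % k = 0 ∧ a / k = i := by
        by_contra hc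
        rcases Nat.eq_zero_or_pos (a % k) with h | h
        · rw [if_pos h] at h0; exact hc ⟨h, h0.symm ▸ by omega⟩
        · rw [if_neg (by omega)] at h0; omega
      have ha1 : (a + d) % k = 0 ∧ (a + d) / k = i := by
        by_contra hc
        rcases Nat.eq_zero_or_pos ((a + d) % k) with h | h
        · rw [if_pos h] at h1; exact hc ⟨h, h1.symm ▸ by omega⟩
        · rw [if_neg (by omega)] at h1; omega
      have e0 : a = k * i := by
        have := Nat.div_add_mod a k
        rw [ha0.1, ha0.2] at this; omega
      have e1 : a + d = k * i := by
        have := Nat.div_add_mod (a + d) k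
        rw [ha1.1, ha1.2] at this; omega
      omega
end

section
/- Let k > r ≥ 2 be integers. If j_{k,r} = 1 (that is, gcd(k, #r) > 1 and gcd(k−1, #r) = 1), then w_2(k;r) = rk − r + 1. -/
lemma coprime_of_gcd_primorialUpTo_eq_one {m r d : ℕ} (h : Nat.gcd m (primorialUpTo r) = 1)
    (hd : 0 < d) (hdr : d ≤ r) : Nat.Coprime d m :=
  Nat.coprime_of_dvd fun p hp hpd hpm => by
    have hpr : p ∣ primorial r := hp.dvd_primorial_iff.2 ((Nat.le_of_dvd hd hpd).trans hdr)
    exact hp.one_lt.ne' (Nat.dvd_one.1 (h ▸ Nat.dvd_gcd hpm hpr))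

lemma gcd_sub_jkr_primorialUpTo {k r : ℕ} (hj : 0 < jkr k r) :
    Nat.gcd (k - jkr k r) (primorialUpTo r) = 1 :=
  Nat.sInf_mem (Nat.nonempty_of_pos_sInf hj)

lemma exists_lt_dvd_add_mul {m d : ℕ} (hm : 0 < m) (hd : Nat.Coprime d m) (a : ℕ) :
    ∃ t < m, m ∣ a + t * d := by
  have : NeZero m := ⟨hm.ne'⟩
  refine ⟨(-(a : ZMod m) * (d : ZMod m)⁻¹).val, ZMod.val_lt _, ?_⟩
  rw [← ZMod.natCast_eq_zero_iff]
  push_cast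
  rw [ZMod.natCast_val, ZMod.cast_id', id, mul_assoc, mul_comm _ (d : ZMod m),
    ZMod.coe_mul_inv_eq_one d hd]
  ring

lemma vdwProp_twoColors_iff {r k n : ℕ} (hr : 0 < r) :
    vdwProp r (twoColors k) n ↔ ∀ χ : ℕ → ℕ, (∀ x, 1 ≤ x → x ≤ n → χ x < r) →
      (∃ a, 1 ≤ a ∧ ∃ d, 1 ≤ d ∧ a + (k - 1) * d ≤ n ∧ ∀ t < k, χ (a + t * d) = 0) ∨
      ∃ x y, 1 ≤ x ∧ x < y ∧ y ≤ n ∧ χ x ≠ 0 ∧ χ x = χ y := by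
  refine forall_congr' fun χ => imp_congr_right fun hχ => ⟨?_, ?_⟩
  · rintro ⟨i, -, a, ha, d, hd, hle, hmono⟩
    by_cases hi : i = 0
    · subst hi
      exact Or.inl ⟨a, ha, d, hd, hle, hmono⟩
    · simp only [twoColors, hi, if_false] at hle hmono
      have hx := hmono 0 two_pos
      have hy := hmono 1 one_lt_two
      simp only [zero_mul, add_zero, one_mul] at hx hy
      exact Or.inr ⟨a, a + d, ha, by omega, by omega, hx ▸ hi, hx.trans hy.symm⟩
  · rintro (⟨a, ha, d, hd, hle, hmono⟩ | ⟨x, y, hx, hxy, hy, hx0, hxy'⟩)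
    · exact ⟨0, hr, a, ha, d, hd, hle, hmono⟩
    · refine ⟨χ x, hχ x hx (by omega), x, hx, y - x, by omega, ?_, fun t ht => ?_⟩
      · simp only [twoColors, hx0, if_false]
        omega
      · simp only [twoColors, hx0, if_false] at ht
        interval_cases t
        · simp
        · rw [one_mul, Nat.add_sub_cancel' hxy.le, hxy']

def sparseColoring (k r x : ℕ) : ℕ := if (k - 1) ∣ x ∧ x < r * (k - 1) then x / (k - 1) else 0

lemma sparseColoring_lt {k r : ℕ} (hr : 0 < r) (x : ℕ) : sparseColoring k r x < r := by
  unfold sparseColoring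
  split_ifs with h
  · exact Nat.div_lt_of_lt_mul (by rw [mul_comm]; exact h.2)
  · exact hr

lemma sparseColoring_ne_zero {k r x : ℕ} (hdvd : (k - 1) ∣ x) (hx : 0 < x)
    (hxr : x < r * (k - 1)) : sparseColoring k r x ≠ 0 := by
  rw [sparseColoring, if_pos ⟨hdvd, hxr⟩]
  exact (Nat.div_pos (Nat.le_of_dvd hx hdvd) (Nat.pos_of_dvd_of_pos hdvd hx)).ne'

lemma eq_sparseColoring_mul {k r x : ℕ} (hx : sparseColoring k r x ≠ 0) :
    x = sparseColoring k r x * (k - 1) := by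
  unfold sparseColoring at *
  split_ifs at * with h
  · exact (Nat.div_mul_cancel h.1).symm
  · exact absurd rfl hx

lemma not_vdwProp_twoColors {k r n : ℕ} (hr : 0 < r) (hk : 1 < k)
    (hcop : ∀ d, 0 < d → d < r → Nat.Coprime d (k - 1)) (hn : n ≤ r * (k - 1)) :
    ¬ vdwProp r (twoColors k) n := by
  rw [vdwProp_twoColors_iff hr]
  intro h
  rcases h (sparseColoring k r) fun x _ _ => sparseColoring_lt hr x with
    ⟨a, ha, d, hd, hle, hmono⟩ | ⟨x, y, -, hxy, -, hx0, hxy'⟩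
  · have hdr : d < r := by
      refine Nat.lt_of_mul_lt_mul_left (a := k - 1) ?_
      rw [mul_comm _ r]
      omega
    obtain ⟨t, ht, hdvd⟩ := exists_lt_dvd_add_mul (by omega) (hcop d hd hdr) a
    have htd : t * d < (k - 1) * d := Nat.mul_lt_mul_of_pos_right ht hd
    exact sparseColoring_ne_zero hdvd (by omega) (by omega) (hmono t (by omega))
  · have hy0 : sparseColoring k r y ≠ 0 := hxy' ▸ hx0
    have := eq_sparseColoring_mul hx0
    have := eq_sparseColoring_mul hy0
    rw [hxy'] at *
    omega

/-- The values `b 0 = 0` and `b m = n + 1` are sentinels: only `b 1, …, b (m - 1)` lie in `[1, n]`. -/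
structure IsAPTransversal (k n m : ℕ) (b : ℕ → ℕ) : Prop where
  strictMonoOn : StrictMonoOn b (Set.Iic m)
  zero : b 0 = 0
  last : b m = n + 1
  hit : ∀ a d, 1 ≤ a → 1 ≤ d → a + (k - 1) * d ≤ n → ∃ j ≤ m, ∃ t < k, b j = a + t * d

namespace IsAPTransversal

variable {k n m r : ℕ} {b : ℕ → ℕ}

lemma lt_iff_lt (hb : IsAPTransversal k n m b) {i j : ℕ} (hi : i ≤ m) (hj : j ≤ m) :
    b i < b j ↔ i < j :=
  hb.strictMonoOn.lt_iff_lt hi hj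

lemma le_iff_le (hb : IsAPTransversal k n m b) {i j : ℕ} (hi : i ≤ m) (hj : j ≤ m) :
    b i ≤ b j ↔ i ≤ j :=
  hb.strictMonoOn.le_iff_le hi hj

lemma le_last (hb : IsAPTransversal k n m b) {i : ℕ} (hi : i ≤ m) : b i ≤ n + 1 :=
  hb.last ▸ (hb.le_iff_le hi le_rfl).2 hi

lemma succ_le_add (hb : IsAPTransversal k n m b) (hk : 0 < k) {i : ℕ} (hi : i < m) :
    b (i + 1) ≤ b i + k := by
  by_cases hwin : b i + k ≤ n
  · obtain ⟨j, hj, t, ht, hbj⟩ := hb.hit (b i + 1) 1 le_add_self le_rfl (by omega)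
    have hij : i < j := (hb.lt_iff_lt hi.le hj).1 (by omega)
    have : b (i + 1) ≤ b j := (hb.le_iff_le hi hj).2 hij
    omega
  · have : b (i + 1) ≤ n + 1 := hb.le_last hi
    omega

lemma le_add_mul (hb : IsAPTransversal k n m b) (hk : 0 < k) {i j : ℕ} (hij : i ≤ j) (hj : j ≤ m) :
    b j ≤ b i + (j - i) * k := by
  induction j, hij using Nat.le_induction with
  | base => simp
  | succ j hij ih =>
    have := hb.succ_le_add hk hj
    rw [Nat.sub_add_comm hij, add_one_mul]
    have := ih (by omega)
    omega

lemma reflect (hb : IsAPTransversal k n m b) :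
    IsAPTransversal k n m (fun i => n + 1 - b (m - i)) where
  strictMonoOn i hi j hj hij := by
    dsimp only
    have := hb.le_last (m.sub_le i)
    have := (hb.lt_iff_lt (m.sub_le j) (m.sub_le i)).2 (by rw [Set.mem_Iic] at hi hj; omega)
    omega
  zero := by simp [hb.last]
  last := by simp [hb.zero]
  hit a d ha hd hle := by
    obtain ⟨j, hj, t, ht, hbj⟩ := hb.hit (n + 1 - (a + (k - 1) * d)) d (by omega) hd (by omega)
    refine ⟨m - j, m.sub_le j, k - 1 - t, by omega, ?_⟩
    have : (k - 1 - t) * d + t * d = (k - 1) * d := by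
      rw [← add_mul, Nat.sub_add_cancel (by omega)]
    rw [Nat.sub_sub_self hj]
    omega

lemma le_mul_add_one (hb : IsAPTransversal k (r * (k - 1) + 1) r b) (hk : Even k)
    (hrk : r < k) {i : ℕ} (hi : i < r) : b i ≤ i * (k - 1) + 1 := by
  induction i using Nat.strong_induction_on with
  | _ i ih =>
  obtain hi1 | ⟨j, rfl⟩ : i ≤ 1 ∨ ∃ j, i = j + 2 := by
    rcases Nat.lt_or_ge i 2 with h | h
    · exact Or.inl (by omega)
    · exact Or.inr ⟨i - 2, by omega⟩
  · interval_cases i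
    · simp [hb.zero]
    · have : b 1 ≤ b 0 + k := hb.succ_le_add (by omega) (by omega)
      rw [hb.zero] at this
      omega
  by_contra! hjump
  rw [Nat.even_iff] at hk
  have hj := ih j (by omega) (by omega)
  have hj1 := ih (j + 1) (by omega) (by omega)
  have hgap : b (j + 2) ≤ b (j + 1) + k := hb.succ_le_add (by omega) (by omega)
  obtain ⟨s, rfl⟩ : ∃ s, r = j + 3 + s := ⟨r - (j + 3), by omega⟩
  have hj3 := hb.le_add_mul (by omega) (i := j + 3) (j := j + 3 + s) (by omega) le_rfl
  rw [hb.last, Nat.add_sub_cancel_left] at hj3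
  have : (j + 3 + s) * (k - 1) = j * (k - 1) + 3 * (k - 1) + s * (k - 1) := by ring
  have : s * k = s * (k - 1) + s := by rw [← Nat.mul_add_one, Nat.sub_add_cancel (by omega)]
  have : (j + 1) * (k - 1) = j * (k - 1) + (k - 1) := by ring
  have : (j + 2) * (k - 1) = j * (k - 1) + 2 * (k - 1) := by ring
  -- `b (j + 1)` and `b (j + 2)` have the wrong parity for this progression, and every other
  -- `b l` lies outside it.
  obtain ⟨l, hl, t, ht, hbl⟩ := hb.hit (j * (k - 1) + 3) 2 (by omega) (by omega) (by omega)
  obtain h | rfl | rfl | h : l ≤ j ∨ l = j + 1 ∨ l = j + 2 ∨ j + 3 ≤ l := by omega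
  · have := (hb.le_iff_le hl (by omega)).2 h
    omega
  · omega
  · omega
  · have := (hb.le_iff_le (by omega) hl).2 h
    omega

lemma eq_mul_add_one (hb : IsAPTransversal k (r * (k - 1) + 1) r b) (hk : Even k) (hrk : r < k)
    {i : ℕ} (hi0 : 0 < i) (hi : i < r) : b i = i * (k - 1) + 1 := by
  have hle := hb.le_mul_add_one hk hrk hi
  have hge := hb.reflect.le_mul_add_one hk hrk (i := r - i) (by omega)
  rw [Nat.sub_sub_self hi.le] at hge
  have := hb.le_last hi.le
  have : (r - i) * (k - 1) + i * (k - 1) = r * (k - 1) := by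
    rw [← add_mul, Nat.sub_add_cancel hi.le]
  omega

lemma not_coprime (hb : IsAPTransversal k (r * (k - 1) + 1) r b) (hk : Even k) (hrk : r < k) :
    ¬ Nat.Coprime r (k - 1) := by
  intro hcop
  obtain rfl | hr := r.eq_zero_or_pos
  · simpa [hb.zero] using hb.last
  obtain ⟨j, hj, t, ht, hbj⟩ := hb.hit 1 r le_rfl hr (by rw [Nat.mul_comm (k - 1)]; omega)
  obtain rfl | hj0 := j.eq_zero_or_pos
  · rw [hb.zero] at hbj
    omega
  obtain rfl | hjr := hj.eq_or_lt
  · rw [hb.last] at hbj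
    have := Nat.mul_le_mul_right j (show t ≤ k - 1 by omega)
    rw [mul_comm (k - 1)] at this
    omega
  rw [hb.eq_mul_add_one hk hrk hj0 hjr] at hbj
  have hdvd : r ∣ j * (k - 1) := ⟨t, by rw [mul_comm r]; omega⟩
  have := Nat.le_of_dvd hj0 (hcop.dvd_of_dvd_mul_right hdvd)
  omega

lemma eq_of_le (hb : IsAPTransversal k (r * (k - 1) + 1) m b) (hm : m ≤ r) (hrk : r < k) :
    m = r := by
  have hcover := hb.le_add_mul (by omega) (Nat.zero_le m) le_rfl
  rw [hb.zero, hb.last, Nat.sub_zero] at hcover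
  by_contra hne
  have := Nat.mul_le_mul_right k (show m ≤ r - 1 by omega)
  have : (r - 1) * k + k = r * k := by rw [← add_one_mul, Nat.sub_add_cancel (by omega)]
  have : r * (k - 1) + r = r * k := by rw [← Nat.mul_add_one, Nat.sub_add_cancel (by omega)]
  omega

end IsAPTransversal

lemma exists_isAPTransversal {k n : ℕ} {B : Finset ℕ} (hB : B ⊆ Finset.Icc 1 n)
    (hhit : ∀ a d, 1 ≤ a → 1 ≤ d → a + (k - 1) * d ≤ n → ∃ t < k, a + t * d ∈ B) :
    ∃ b, IsAPTransversal k n (B.card + 1) b := by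
  set S := insert 0 (insert (n + 1) B)
  have hS_le : ∀ x ∈ S, x ≤ n + 1 := by
    intro x hx
    rcases Finset.mem_insert.1 hx with rfl | hx
    · omega
    rcases Finset.mem_insert.1 hx with rfl | hx
    · omega
    · exact (Finset.mem_Icc.1 (hB hx)).2.trans n.le_succ
  have hS : S.card = B.card + 2 := by
    rw [Finset.card_insert_of_notMem, Finset.card_insert_of_notMem]
    · exact fun h => by have := Finset.mem_Icc.1 (hB h); omega
    · simp only [Finset.mem_insert, not_or]
      exact ⟨by omega, fun h => by have := Finset.mem_Icc.1 (hB h); omega⟩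
  set e := S.orderEmbOfFin hS
  refine ⟨fun i => if h : i < B.card + 2 then e ⟨i, h⟩ else 0, ⟨?_, ?_, ?_, ?_⟩⟩
  · intro i hi j hj hij
    simp only [Set.mem_Iic] at hi hj
    simp only [dif_pos (show i < B.card + 2 by omega), dif_pos (show j < B.card + 2 by omega)]
    exact e.strictMono hij
  · rw [dif_pos (by omega), Finset.orderEmbOfFin_zero hS (by omega)]
    exact le_antisymm (Finset.min'_le _ _ (by simp [S])) (Nat.zero_le _)
  · have hlast := Finset.orderEmbOfFin_last hS (by omega)
    rw [dif_pos (by omega)]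
    refine hlast.trans ?_
    exact le_antisymm (Finset.max'_le _ _ _ hS_le) (Finset.le_max' _ _ (by simp [S]))
  · intro a d ha hd hle
    obtain ⟨t, ht, hmem⟩ := hhit a d ha hd hle
    obtain ⟨i, hi⟩ : a + t * d ∈ Set.range e := by
      rw [Finset.range_orderEmbOfFin]
      simp [S, hmem]
    exact ⟨i, by omega, t, ht, by simp [i.isLt, hi]⟩

lemma vdwProp_twoColors_mul_sub_one_add_one {k r : ℕ} (hr : 0 < r) (hk : Even k) (hrk : r < k)
    (hcop : Nat.Coprime r (k - 1)) : vdwProp r (twoColors k) (r * (k - 1) + 1) := by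
  rw [vdwProp_twoColors_iff hr]
  intro χ hχ
  by_contra! ⟨hzero, hinj⟩
  set B := (Finset.Icc 1 (r * (k - 1) + 1)).filter (χ · ≠ 0)
  have hcard : B.card + 1 ≤ r := by
    have := Finset.card_le_card_of_injOn χ (s := B) (t := Finset.Icc 1 (r - 1)) ?_ ?_
    · simp only [Nat.card_Icc, add_tsub_cancel_right] at this
      omega
    · intro x hx
      rw [Finset.mem_coe, Finset.mem_filter, Finset.mem_Icc] at hx
      rw [Finset.mem_coe, Finset.mem_Icc]
      have := hχ x hx.1.1 hx.1.2
      omega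
    · intro x hx y hy hxy
      rw [Finset.mem_coe, Finset.mem_filter, Finset.mem_Icc] at hx hy
      by_contra hne
      rcases Nat.lt_or_gt_of_ne hne with hlt | hlt
      · exact hinj x y hx.1.1 hlt hy.1.2 hx.2 hxy
      · exact hinj y x hy.1.1 hlt hx.1.2 hy.2 hxy.symm
  obtain ⟨b, hb⟩ := exists_isAPTransversal (B := B) (Finset.filter_subset _ _)
    fun a d ha hd hle => by
      obtain ⟨t, ht, hne⟩ := hzero a ha d hd hle
      have : t * d ≤ (k - 1) * d := Nat.mul_le_mul_right d (by omega)
      exact ⟨t, ht, Finset.mem_filter.2 ⟨Finset.mem_Icc.2 ⟨by omega, by omega⟩, hne⟩⟩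
  rw [hb.eq_of_le hcard hrk] at hb
  exact hb.not_coprime hk hrk hcop

/-- Part II(i): if `j_{k,r} = 1`, then `w₂(k;r) = rk - r + 1`. -/
theorem w2_eq_of_j_eq_one (k r : ℕ) (hr : 2 ≤ r) (hk : r < k)
    (hj : jkr k r = 1) :
    IsLeast {n : ℕ | 0 < n ∧ vdwProp r (twoColors k) n} (r * k - r + 1) := by
  have hgcd := gcd_sub_jkr_primorialUpTo (hj ▸ one_pos)
  rw [hj] at hgcd
  have hcop : ∀ d, 0 < d → d ≤ r → Nat.Coprime d (k - 1) := fun d hd hdr =>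
    coprime_of_gcd_primorialUpTo_eq_one hgcd hd hdr
  have hkeven : Even k := by
    have := Nat.odd_iff.1 (Nat.coprime_two_left.1 (hcop 2 two_pos hr))
    rw [Nat.even_iff]
    omega
  rw [← Nat.mul_sub_one]
  refine ⟨⟨Nat.succ_pos _, vdwProp_twoColors_mul_sub_one_add_one (by omega) hkeven hk
    (hcop r (by omega) le_rfl)⟩, fun n ⟨_, hn⟩ => ?_⟩
  by_contra! hlt
  exact not_vdwProp_twoColors (by omega) (by omega) (fun d hd hdr => hcop d hd hdr.le)
    (by omega) hn
end

section
/- Let k > r ≥ 2 be integers with r composite, and set j = j_{k,r}. If j ≥ 2, then w_2(k;r) ≥ rk − j(r−2). -/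
lemma exists_block (q j r : ℕ) (hq : 1 ≤ q) (hj : 2 ≤ j) (hr4 : 4 ≤ r)
    (hcop : ∀ d, 1 ≤ d → d ≤ r → Nat.Coprime d q)
    (a d : ℕ) (ha : 1 ≤ a) (hd : 1 ≤ d)
    (hub : a + (q + j - 1) * d + 1 ≤ r * q + 2 * j) :
    ∃ t, t < q + j ∧ ∃ m, 1 ≤ m ∧ m + 1 ≤ r ∧ a + t * d = j + m * q := by
  -- Step A : d + 1 ≤ r
  have hdr : d + 1 ≤ r := by
    by_contra h
    push_neg at h
    have hrd : r ≤ d := by omega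
    have h1 : (q + j - 1) * r ≤ (q + j - 1) * d := Nat.mul_le_mul_left _ hrd
    have h3 : (q + j - 1) * r + r = (q + j) * r := by
      have h : q + j - 1 + 1 = q + j := by omega
      calc (q + j - 1) * r + r = (q + j - 1 + 1) * r := by ring
        _ = (q + j) * r := by rw [h]
    have h4 : (q + j) * r = q * r + j * r := by ring
    have h5 : 2 * r ≤ j * r := Nat.mul_le_mul_right r hj
    have h6 : j * 4 ≤ j * r := Nat.mul_le_mul_left j hr4
    have h7 : q * r = r * q := by ring
    omega
  -- Step B : find t0 with a + t0*d ≡ j mod q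
  haveI : NeZero q := ⟨by omega⟩
  have hcd : Nat.Coprime d q := hcop d hd (by omega)
  obtain ⟨t0, ht0, hmod⟩ : ∃ t0, t0 < q ∧ (a + t0 * d) ≡ j [MOD q] := by
    refine ⟨(((j : ZMod q) - (a : ZMod q)) * (d : ZMod q)⁻¹).val, ZMod.val_lt _, ?_⟩
    apply (ZMod.natCast_eq_natCast_iff _ _ _).mp
    push_cast
    rw [show (((((j : ZMod q) - (a : ZMod q)) * (d : ZMod q)⁻¹).val : ℕ) : ZMod q)
        = ((j : ZMod q) - (a : ZMod q)) * (d : ZMod q)⁻¹ from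
      (ZMod.natCast_val _).trans (ZMod.cast_id _ _)]
    rw [mul_assoc, mul_comm ((d : ZMod q)⁻¹), ZMod.coe_mul_inv_eq_one d hcd, mul_one]
    ring
  obtain ⟨c, hc⟩ := hmod.dvd
  push_cast at hc
  have hm0 : (a : ℤ) + t0 * d = j + (-c) * q := by linear_combination -hc
  generalize hm0def : -c = m0 at hm0
  clear hc hmod hcd
  have hubZ : (a : ℤ) + ((q : ℤ) + j - 1) * d + 1 ≤ r * q + 2 * j := by
    have h := hub
    zify [show 1 ≤ q + j by omega] at h
    linarith
  have ht0Z : (t0 : ℤ) ≤ (q : ℤ) - 1 := by omega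
  have hdZ : (1 : ℤ) ≤ d := by exact_mod_cast hd
  have haZ : (1 : ℤ) ≤ a := by exact_mod_cast ha
  have hjZ : (2 : ℤ) ≤ j := by exact_mod_cast hj
  have hqZ : (1 : ℤ) ≤ q := by exact_mod_cast hq
  have hdrZ : (d : ℤ) + 1 ≤ r := by exact_mod_cast hdr
  by_cases h1 : 1 ≤ m0
  · -- take t = t0
    have hup : m0 + 1 ≤ r := by
      by_contra h2
      push_neg at h2
      have hrm : (r : ℤ) ≤ m0 := by omega
      nlinarith [mul_nonneg (show (0:ℤ) ≤ (q : ℤ) - 1 - t0 by omega) (show (0:ℤ) ≤ d by omega),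
        mul_le_mul_of_nonneg_right hrm (show (0:ℤ) ≤ q by omega),
        mul_le_mul_of_nonneg_left hdZ (show (0:ℤ) ≤ (j:ℤ) by omega)]
    refine ⟨t0, by omega, m0.toNat, by omega, by omega, ?_⟩
    have h9 : (a : ℤ) + t0 * d = j + (m0.toNat : ℤ) * q := by
      rw [Int.toNat_of_nonneg (by omega)]; exact hm0
    exact_mod_cast h9
  · push_neg at h1
    have hm0le : m0 ≤ 0 := by omega
    obtain ⟨s, ρ, hρ0, hρd, hsum⟩ : ∃ s ρ : ℤ, 0 ≤ ρ ∧ ρ < d ∧ (d:ℤ) - m0 = s * d + ρ :=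
      ⟨((d:ℤ) - m0)/d, ((d:ℤ) - m0) % d, Int.emod_nonneg _ (by omega),
        Int.emod_lt_of_pos _ (by omega),
        by rw [mul_comm]; exact (Int.mul_ediv_add_emod _ _).symm⟩
    have hm1a : (1:ℤ) ≤ m0 + s * d := by linarith
    have hm1b : m0 + s * d ≤ d := by linarith
    have hs0 : 0 ≤ s := by
      by_contra hneg
      push_neg at hneg
      have h8 : s * d < 0 := mul_neg_of_neg_of_pos hneg (by omega)
      linarith
    have ht1nn : (0:ℤ) ≤ (t0:ℤ) + s * q :=
      add_nonneg (by omega) (mul_nonneg hs0 (by omega))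
    have hval : (a:ℤ) + ((t0:ℤ) + s * q) * d = j + (m0 + s * d) * q := by
      linear_combination hm0
    have ht1ub : (t0:ℤ) + s * q ≤ (q:ℤ) + j - 1 := by
      by_contra h2
      push_neg at h2
      have h3 : (q:ℤ) + j ≤ (t0:ℤ) + s * q := by omega
      nlinarith [mul_le_mul_of_nonneg_right h3 (show (0:ℤ) ≤ d by omega),
        mul_le_mul_of_nonneg_right hm1b (show (0:ℤ) ≤ q by omega),
        mul_le_mul_of_nonneg_left hdZ (show (0:ℤ) ≤ (j:ℤ) by omega)]
    refine ⟨((t0:ℤ) + s * q).toNat, by omega, (m0 + s * d).toNat, by omega, by omega, ?_⟩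
    have h9 : (a : ℤ) + ((((t0:ℤ) + s * q).toNat : ℤ)) * d = j + (((m0 + s * d).toNat : ℤ)) * q := by
      rw [Int.toNat_of_nonneg ht1nn, Int.toNat_of_nonneg (by omega)]
      exact hval
    exact_mod_cast h9

/-- Part III (lower bound): if `r` is composite and `j = j_{k,r} ≥ 2`, then
`w₂(k;r) ≥ rk - j(r-2)`, i.e. `rk - j(r-2)` is a lower bound for the set of
positive integers `n` with the van der Waerden property. -/
theorem w2_ge_of_r_composite (k r : ℕ) (hr : 2 ≤ r) (hk : r < k)
    (hrc : ¬ r.Prime) (hj : 2 ≤ jkr k r) :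
    ∀ n : ℕ, 0 < n → vdwProp r (twoColors k) n → r * k - jkr k r * (r - 2) ≤ n := by
  have hr4 : 4 ≤ r := by
    have h2 : r ≠ 2 := fun h => hrc (h ▸ Nat.prime_two)
    have h3 : r ≠ 3 := fun h => hrc (h ▸ Nat.prime_three)
    omega
  set P := primorialUpTo r with hP
  have h2P : 2 ∣ P := Finset.dvd_prod_of_mem (fun p => p)
    (Finset.mem_filter.mpr ⟨Finset.mem_range.mpr (by omega), Nat.prime_two⟩)
  have hne : {j : ℕ | Nat.gcd (k - j) P = 1}.Nonempty := by
    refine ⟨k - 1, ?_⟩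
    have h : k - (k - 1) = 1 := by omega
    simp only [Set.mem_setOf_eq, h, Nat.gcd_one_left]
  have hgcd : Nat.gcd (k - jkr k r) P = 1 := Nat.sInf_mem hne
  set j := jkr k r with hjdef
  have hjk : j < k := by
    by_contra hge
    push_neg at hge
    have h : k - j = 0 := by omega
    rw [h, Nat.gcd_zero_left] at hgcd
    omega
  set q := k - j with hqdef
  have hq1 : 1 ≤ q := by omega
  have hkq : k = q + j := by omega
  have hcop : ∀ d, 1 ≤ d → d ≤ r → Nat.Coprime d q := by
    intro d hd1 hdr
    by_contra hne'
    obtain ⟨p, pp, pdvd⟩ := Nat.exists_prime_and_dvd hne'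
    have hpd : p ∣ d := pdvd.trans (Nat.gcd_dvd_left _ _)
    have hpq : p ∣ q := pdvd.trans (Nat.gcd_dvd_right _ _)
    have hpled : p ≤ d := Nat.le_of_dvd (by omega) hpd
    have hpP : p ∣ P := Finset.dvd_prod_of_mem (fun p => p)
      (Finset.mem_filter.mpr ⟨Finset.mem_range.mpr (by omega), pp⟩)
    have : p ∣ 1 := hgcd ▸ Nat.dvd_gcd hpq hpP
    have := Nat.le_of_dvd one_pos this
    have := pp.two_le
    omega
  -- N identity
  have e1 : r * q + r * j = r * k := by rw [← Nat.mul_add]; congr 1; omega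
  have e2 : j * (r - 2) + j * 2 = j * r := by rw [← Nat.mul_add]; congr 1; omega
  have e3 : r * j = j * r := Nat.mul_comm r j
  intro n hn hvdw
  by_contra hlt
  push_neg at hlt
  have hnle : n + 1 ≤ r * q + 2 * j := by omega
  -- the bad coloring
  set χ : ℕ → ℕ := fun x =>
    if j < x ∧ q ∣ (x - j) ∧ (x - j) / q + 1 ≤ r then (x - j) / q else 0 with hχ
  have hχb : ∀ m, 1 ≤ m → m + 1 ≤ r → χ (j + m * q) = m := by
    intro m h1 h2
    have e : j + m * q - j = m * q := by omega
    have hmq : 1 ≤ m * q := Nat.one_le_iff_ne_zero.mpr (Nat.mul_ne_zero (by omega) (by omega))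
    have hcond : j < j + m * q ∧ q ∣ (j + m * q - j) ∧ (j + m * q - j) / q + 1 ≤ r := by
      refine ⟨by omega, ?_, ?_⟩
      · rw [e]; exact dvd_mul_left q m
      · rw [e, Nat.mul_div_cancel m (by omega : 0 < q)]; exact h2
    rw [hχ]
    simp only [if_pos hcond]
    rw [e, Nat.mul_div_cancel m (by omega : 0 < q)]
  have hχinv : ∀ x i, 1 ≤ i → χ x = i → x = j + i * q := by
    intro x i hi hx
    rw [hχ] at hx
    simp only at hx
    split_ifs at hx with hcond
    · obtain ⟨hlt', hdvd, _⟩ := hcond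
      have : (x - j) / q * q = x - j := Nat.div_mul_cancel hdvd
      rw [hx] at this
      omega
    · omega
  have hχvalid : ∀ x, 1 ≤ x → x ≤ n → χ x < r := by
    intro x _ _
    rw [hχ]
    simp only
    split_ifs with hcond
    · omega
    · omega
  obtain ⟨i, hi, a, ha1, d, hd1, hle, hcol⟩ := hvdw χ hχvalid
  by_cases hi0 : i = 0
  · subst hi0
    have hki : twoColors k 0 = k := by simp [twoColors]
    rw [hki] at hle hcol
    have hkm1 : k - 1 = q + j - 1 := by omega
    obtain ⟨t, ht, m, hm1, hmr, heq⟩ := exists_block q j r hq1 hj hr4 hcop a d ha1 hd1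
      (by rw [hkm1] at hle; omega)
    have hc0 := hcol t (by omega)
    rw [heq, hχb m hm1 hmr] at hc0
    omega
  · have hki : twoColors k i = 2 := by simp [twoColors, hi0]
    rw [hki] at hle hcol
    have hc0 := hcol 0 (by omega)
    have hc1 := hcol 1 (by omega)
    simp only [Nat.zero_mul, Nat.add_zero, Nat.one_mul] at hc0 hc1
    have ha' : a = j + i * q := hχinv a i (by omega) hc0
    have ha'' : a + d = j + i * q := hχinv (a + d) i (by omega) hc1
    omega
end

section
/- Let k > r ≥ 2 be integers with r prime, set j = j_{k,r}, ℓ = ℓ_{k,r}, and m = min{j, ℓ}. If j ≥ 2 and ℓ ≥ 1, then w_2(k;r) ≥ rk − m(r−2). -/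
/-- Part IV (lower bound): if `r` is prime, `j = j_{k,r} ≥ 2`, `ℓ = ℓ_{k,r} ≥ 1`,
and `m = min(j, ℓ)`, then `w₂(k;r) ≥ rk - m(r-2)`. -/
theorem w2_ge_of_r_prime (k r : ℕ) (hr : 2 ≤ r) (hk : r < k)
    (hrp : r.Prime) (hj : 2 ≤ jkr k r) (hl : 1 ≤ lkr k r) :
    ∀ n : ℕ, 0 < n → vdwProp r (twoColors k) n →
      r * k - min (jkr k r) (lkr k r) * (r - 2) ≤ n := by
  intro n hn hvdw
  by_contra hcon
  push_neg at hcon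
  -- r is at least 3
  have hr3 : 3 ≤ r := by
    by_contra h
    have hr2 : r = 2 := by omega
    subst hr2
    have hP2 : primorialUpTo 2 = 2 := by decide
    have hle1 : jkr k 2 ≤ 1 := by
      rcases Nat.even_or_odd k with he | ho
      · refine Nat.sInf_le ?_
        show Nat.gcd (k - 1) (primorialUpTo 2) = 1
        rw [hP2]
        have hodd : Odd (k - 1) := Nat.Even.sub_odd (by omega) he odd_one
        exact hodd.coprime_two_right
      · have h0 : (0 : ℕ) ∈ {j : ℕ | Nat.gcd (k - j) (primorialUpTo 2) = 1} := by
          show Nat.gcd (k - 0) (primorialUpTo 2) = 1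
          rw [hP2, Nat.sub_zero]
          exact ho.coprime_two_right
        exact le_trans (Nat.sInf_le h0) (by omega)
    omega
  -- membership facts for jkr and lkr
  have hk1 : 1 ≤ k := by omega
  have hjset : (k - 1) ∈ {j : ℕ | Nat.gcd (k - j) (primorialUpTo r) = 1} := by
    show Nat.gcd (k - (k - 1)) (primorialUpTo r) = 1
    rw [Nat.sub_sub_self hk1]
    exact Nat.gcd_one_left _
  have hjmem : Nat.gcd (k - jkr k r) (primorialUpTo r) = 1 := Nat.sInf_mem ⟨k - 1, hjset⟩
  have hjle : jkr k r ≤ k - 1 := Nat.sInf_le hjset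
  have hlne : {l : ℕ | Nat.gcd (k - l) (primorialUpTo r) = r}.Nonempty := by
    by_contra hno
    rw [Set.not_nonempty_iff_eq_empty] at hno
    rw [lkr, hno, Nat.sInf_empty] at hl
    omega
  have hlmem : Nat.gcd (k - lkr k r) (primorialUpTo r) = r := Nat.sInf_mem hlne
  -- decompositions
  obtain ⟨R, hR⟩ : ∃ R, r = R + 2 := ⟨r - 2, by omega⟩
  subst hR
  have hR1 : 1 ≤ R := by omega
  obtain ⟨M, hM⟩ : ∃ M, min (jkr k (R + 2)) (lkr k (R + 2)) = M + 1 := by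
    refine ⟨min (jkr k (R + 2)) (lkr k (R + 2)) - 1, ?_⟩
    have h1 : 1 ≤ jkr k (R + 2) := by omega
    have := le_min h1 hl
    omega
  have hminj : min (jkr k (R + 2)) (lkr k (R + 2)) ≤ jkr k (R + 2) := min_le_left _ _
  obtain ⟨K, hkK⟩ : ∃ K, k = K + M + 1 := ⟨k - M - 1, by omega⟩
  subst hkK
  have hK1 : 1 ≤ K := by omega
  have hKM : R + 2 ≤ K + M := by omega
  -- gcd fact for K
  have gK : Nat.gcd K (primorialUpTo (R + 2)) = 1 ∨
      Nat.gcd K (primorialUpTo (R + 2)) = R + 2 := by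
    have hsub : K + M + 1 - (M + 1) = K := by omega
    rcases min_cases (jkr (K + M + 1) (R + 2)) (lkr (K + M + 1) (R + 2)) with
      ⟨hmin, _⟩ | ⟨hmin, _⟩
    · left
      have hje : jkr (K + M + 1) (R + 2) = M + 1 := by omega
      rw [hje, hsub] at hjmem
      exact hjmem
    · right
      have hle : lkr (K + M + 1) (R + 2) = M + 1 := by omega
      rw [hle, hsub] at hlmem
      exact hlmem
  -- if M = 0 then r ∣ K
  have keyR : M = 0 → (R + 2) ∣ K := by
    intro hM0
    have hle : lkr (K + M + 1) (R + 2) = 1 := by omega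
    rw [hle] at hlmem
    have hsub : K + M + 1 - 1 = K := by omega
    rw [hsub] at hlmem
    exact hlmem ▸ Nat.gcd_dvd_left _ _
  -- coprimality of K with each small d
  have keyCop : ∀ d, 1 ≤ d → d ≤ R + 1 → Nat.Coprime K d := by
    intro d hd1 hd2
    by_contra hcd
    have hg1 : Nat.gcd K d ≠ 1 := hcd
    have hp : (Nat.gcd K d).minFac.Prime := Nat.minFac_prime hg1
    have hpK : (Nat.gcd K d).minFac ∣ K :=
      (Nat.minFac_dvd _).trans (Nat.gcd_dvd_left _ _)
    have hpd : (Nat.gcd K d).minFac ∣ d :=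
      (Nat.minFac_dvd _).trans (Nat.gcd_dvd_right _ _)
    have hpled : (Nat.gcd K d).minFac ≤ d := Nat.le_of_dvd (by omega) hpd
    have hpP : (Nat.gcd K d).minFac ∣ primorialUpTo (R + 2) :=
      prime_dvd_primorial hp (by omega)
    have hpg : (Nat.gcd K d).minFac ∣ Nat.gcd K (primorialUpTo (R + 2)) :=
      Nat.dvd_gcd hpK hpP
    rcases gK with h | h
    · rw [h] at hpg
      exact hp.one_lt.ne' (Nat.dvd_one.mp hpg)
    · rw [h] at hpg
      have := (Nat.prime_dvd_prime_iff_eq hp hrp).mp hpg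
      omega
  -- simplify hcon
  rw [hM] at hcon
  have hcon' : n < (R + 2) * K + 2 * M + 2 := by
    have h1 : (R + 2) * (K + M + 1) = ((R + 2) * K + 2 * M + 2) + (M + 1) * (R + 2 - 2) := by
      have h2 : R + 2 - 2 = R := by omega
      rw [h2]; ring
    rw [h1, Nat.add_sub_cancel] at hcon
    exact hcon
  have hnle : n ≤ (R + 2) * K + 2 * M + 1 := by omega
  -- the coloring
  set χ : ℕ → ℕ := fun x =>
    if (M + 1) < x ∧ (x - (M + 1)) % K = 0 ∧ (x - (M + 1)) / K ≤ R + 1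
    then (x - (M + 1)) / K else 0 with hχ
  have F3 : ∀ x, χ x < R + 2 := by
    intro x
    simp only [hχ]
    split_ifs with h
    · omega
    · omega
  have F1 : ∀ s, 1 ≤ s → s ≤ R + 1 → χ (s * K + (M + 1)) = s := by
    intro s h1 h2
    have hpos : 0 < s * K := Nat.mul_pos (by omega) (by omega)
    simp only [hχ, Nat.add_sub_cancel, Nat.mul_mod_left,
      Nat.mul_div_cancel _ (show 0 < K by omega)]
    rw [if_pos ⟨by omega, trivial, h2⟩]
  have F2 : ∀ x i, 1 ≤ i → χ x = i → x = i * K + (M + 1) := by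
    intro x i h1 hxi
    simp only [hχ] at hxi
    split_ifs at hxi with hcnd
    · obtain ⟨h2, h3, _⟩ := hcnd
      have hdvd : K ∣ x - (M + 1) := Nat.dvd_of_mod_eq_zero h3
      have heq : x - (M + 1) = i * K := by
        rw [← hxi, Nat.div_mul_cancel hdvd]
      exact (Nat.sub_eq_iff_eq_add (by omega)).mp heq
    · omega
  -- core combinatorial lemma: every k-AP in [1, n₀] hits a blocker
  have core : ∀ a d : ℕ, 1 ≤ a → 1 ≤ d → a + (K + M) * d ≤ (R + 2) * K + 2 * M + 1 →
      ∃ s, 1 ≤ s ∧ s ≤ R + 1 ∧ ∃ t, t ≤ K + M ∧ a + t * d = s * K + (M + 1) := by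
    intro a d ha hd hb
    have hdR : d ≤ R + 2 := by
      by_contra hdg
      push_neg at hdg
      have h1 : (K + M) * (R + 3) ≤ (K + M) * d := Nat.mul_le_mul_left _ hdg
      have e1 : (K + M) * (R + 3) = (R + 2) * K + K + R * M + 3 * M := by ring
      linarith [Nat.zero_le (R * M)]
    rcases eq_or_lt_of_le hdR with hdeq | hdlt
    · -- d = R + 2
      subst hdeq
      have hRM : R * M = 0 := by
        have e1 : (K + M) * (R + 2) = (R + 2) * K + R * M + 2 * M := by ring
        have h6 : R * M ≤ 0 := by linarith
        exact Nat.le_zero.mp h6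
      have hM0 : M = 0 := by
        rcases Nat.mul_eq_zero.mp hRM with h | h
        · omega
        · exact h
      subst hM0
      have ha1 : a = 1 := by
        have e1 : (K + 0) * (R + 2) = (R + 2) * K := by ring
        have h7 : a ≤ 1 := by linarith
        omega
      obtain ⟨q, hq⟩ := keyR rfl
      refine ⟨1, le_refl 1, by omega, q, ?_, ?_⟩
      · have : q ≤ (R + 2) * q := Nat.le_mul_of_pos_left q (by omega)
        omega
      · rw [ha1, hq]; ring
    · -- d ≤ R + 1
      have hdle : d ≤ R + 1 := by omega
      have cop : Nat.Coprime K d := keyCop d hd hdle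
      haveI : NeZero d := ⟨by omega⟩
      set u : (ZMod d)ˣ := ZMod.unitOfCoprime K cop with hu
      set c : ℕ := (((a : ZMod d) - ((M : ZMod d) + 1)) * ↑u⁻¹).val with hc
      have hclt : c < d := ZMod.val_lt _
      have hcong : ∀ s : ℕ, s % d = c % d → (s * K + (M + 1)) % d = a % d := by
        intro s hs
        have h1 : ((s : ℕ) : ZMod d) = ((c : ℕ) : ZMod d) :=
          (ZMod.natCast_eq_natCast_iff _ _ _).mpr hs
        have h2 : ((s * K + (M + 1) : ℕ) : ZMod d) = ((a : ℕ) : ZMod d) := by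
          push_cast
          rw [h1, hc, ZMod.natCast_val, ZMod.cast_id]
          have hKu : (K : ZMod d) = ↑u := (ZMod.coe_unitOfCoprime K cop).symm
          rw [hKu, mul_assoc, Units.inv_mul, mul_one]
          ring
        exact (ZMod.natCast_eq_natCast_iff _ _ _).mp h2
      -- construct a member of the hitting set
      have hdm := Nat.div_add_mod (R + 1 - c) d
      set e : ℕ := d * ((R + 1 - c) / d) with he
      set rem : ℕ := (R + 1 - c) % d with hrm
      have hremlt : rem < d := Nat.mod_lt _ (by omega)
      have hcR : c ≤ R := by omega
      have hs2u : c + e ≤ R + 1 := by omega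
      have hs2l : R + 2 ≤ (c + e) + d := by omega
      have hs2c : (c + e) % d = c % d := by
        rw [he]
        exact Nat.add_mul_mod_self_left c d _
      have hs2mem : 1 ≤ c + e ∧ ((c + e) * K + (M + 1)) % d = a % d ∧
          a ≤ (c + e) * K + (M + 1) := by
        refine ⟨by omega, hcong _ hs2c, ?_⟩
        have h1 : (R + 2) * K ≤ ((c + e) + d) * K := Nat.mul_le_mul_right _ hs2l
        have h2 : M ≤ M * d := Nat.le_mul_of_pos_right _ (by omega)
        have e1 : ((c + e) + d) * K = (c + e) * K + d * K := by ring
        have e2 : (K + M) * d = d * K + M * d := by ring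
        linarith
      set S : Set ℕ := {s | 1 ≤ s ∧ (s * K + (M + 1)) % d = a % d ∧
          a ≤ s * K + (M + 1)} with hS
      have hSne : S.Nonempty := ⟨c + e, hs2mem⟩
      obtain ⟨hs11, hs1c, hs1a⟩ : sInf S ∈ S := Nat.sInf_mem hSne
      have hs1le : sInf S ≤ R + 1 := le_trans (Nat.sInf_le hs2mem) hs2u
      set s₁ : ℕ := sInf S with hs₁
      -- upper bound: the blocker is inside the window
      have hub : s₁ * K + (M + 1) ≤ a + (K + M) * d := by
        rcases le_or_gt s₁ d with hsd | hsd
        · have h1 : s₁ * K ≤ d * K := Nat.mul_le_mul_right _ hsd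
          have h2 : M ≤ M * d := Nat.le_mul_of_pos_right _ (by omega)
          have e2 : (K + M) * d = d * K + M * d := by ring
          linarith
        · have hs' : s₁ - d ∉ S := Nat.notMem_of_lt_sInf (by omega)
          have heq : s₁ * K + (M + 1) = ((s₁ - d) * K + (M + 1)) + d * K := by
            have h3 : s₁ = (s₁ - d) + d := by omega
            calc s₁ * K + (M + 1) = ((s₁ - d) + d) * K + (M + 1) := by rw [← h3]
              _ = ((s₁ - d) * K + (M + 1)) + d * K := by ring
          have hc' : ((s₁ - d) * K + (M + 1)) % d = a % d := by
            rw [← Nat.add_mul_mod_self_left ((s₁ - d) * K + (M + 1)) d K, ← heq]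
            exact hs1c
          have hna : ¬ a ≤ (s₁ - d) * K + (M + 1) := fun h => hs' ⟨by omega, hc', h⟩
          push_neg at hna
          have e2 : (K + M) * d = d * K + M * d := by ring
          linarith [Nat.zero_le (M * d)]
      have hdvd : d ∣ (s₁ * K + (M + 1) - a) := (Nat.modEq_iff_dvd' hs1a).mp hs1c.symm
      obtain ⟨t, ht⟩ := hdvd
      have hBt : s₁ * K + (M + 1) = d * t + a := (Nat.sub_eq_iff_eq_add hs1a).mp ht
      have htle : t ≤ K + M := by
        have e3 : (K + M) * d = d * (K + M) := mul_comm _ _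
        have h5 : d * t ≤ d * (K + M) := by linarith
        exact Nat.le_of_mul_le_mul_left h5 (by omega)
      exact ⟨s₁, hs11, hs1le, t, htle, by rw [hBt]; ring⟩
  -- apply vdwProp to our coloring
  obtain ⟨i, hir, a, ha, d, hd, hbd, hcol⟩ := hvdw χ (fun x _ _ => F3 x)
  rcases Nat.eq_zero_or_pos i with hi0 | hip
  · subst hi0
    have hk0 : twoColors (K + M + 1) 0 = K + M + 1 := rfl
    rw [hk0] at hbd hcol
    have hsub : K + M + 1 - 1 = K + M := by omega
    rw [hsub] at hbd
    have hbd' : a + (K + M) * d ≤ (R + 2) * K + 2 * M + 1 := le_trans hbd hnle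
    obtain ⟨s, hs1, hsR, t, htle, hteq⟩ := core a d ha hd hbd'
    have h1 := hcol t (by omega)
    rw [hteq, F1 s hs1 hsR] at h1
    omega
  · have h2 : twoColors (K + M + 1) i = 2 := by
      simp only [twoColors, if_neg (by omega : ¬ i = 0)]
    rw [h2] at hbd hcol
    have e0 := hcol 0 (by omega)
    have e1 := hcol 1 (by omega)
    have x0 := F2 _ i hip e0
    have x1 := F2 _ i hip e1
    rw [Nat.zero_mul, Nat.add_zero] at x0
    have : a + 1 * d = a := by rw [x1, ← x0]
    omega
end

section
/- For every integer k ≥ 5 with k ≡ 4 (mod 6), w_2(k;4) = 4k − 6. -/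
set_option maxHeartbeats 2000000


lemma offsets (f1 f2 f3 : ℕ) (h1 : f1 ≤ 5) (h2 : f2 ≤ f1) (h3 : f3 ≤ f2)
    (m1 : (f1+2) % 3 ≠ f2 % 3) (m2 : (f1+2) % 3 ≠ (f3+1) % 3) (m3 : f2 % 3 ≠ (f3+1) % 3)
    (p15 : f1 % 2 = 0 ∨ (f2 % 2 = 0 ∧ f2 ≤ 4)) (p16 : f1 % 2 = 1 ∨ f2 % 2 = 1)
    (p17 : f2 % 2 = 0 ∨ f3 % 2 = 0) (p18 : f2 % 2 = 1 ∨ f3 % 2 = 1) : False := by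
  interval_cases f1 <;> interval_cases f2 <;> interval_cases f3 <;> omega

lemma core_sorted (k b1 b2 b3 : ℕ) (hk : 10 ≤ k) (hmod : k % 6 = 4)
    (hs1 : b1 ≤ b2) (hs2 : b2 ≤ b3)
    (H : ∀ a d, 1 ≤ a → 1 ≤ d → a + (k-1)*d ≤ 4*k-6 →
      ∃ t, t < k ∧ (a+t*d = b1 ∨ a+t*d = b2 ∨ a+t*d = b3)) : False := by
  obtain ⟨t1, u1, e1⟩ := H 1 1 (by omega) (by omega) (by omega)
  obtain ⟨t14, u14, e14⟩ := H (3*k-5) 1 (by omega) (by omega) (by omega)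
  -- basic range facts
  have F1 : b1 ≤ k ∧ 3*k-5 ≤ b3 := by omega
  clear u1 e1 u14 e14
  -- mod 3 structure from d = 3 progressions at a = k-5, k-4, k-3
  obtain ⟨t22, u22, e22⟩ := H (k-5) 3 (by omega) (by omega) (by omega)
  obtain ⟨t23, u23, e23⟩ := H (k-4) 3 (by omega) (by omega) (by omega)
  obtain ⟨t24, u24, e24⟩ := H (k-3) 3 (by omega) (by omega) (by omega)
  have F2a : k-5 ≤ b1 := by omega
  have F2b : b1 % 3 ≠ b2 % 3 ∧ b1 % 3 ≠ b3 % 3 ∧ b2 % 3 ≠ b3 % 3 := by omega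
  clear u22 e22 u23 e23 u24 e24
  -- b3 ≤ 3k from d = 3 progressions at a = 1, 2, 3
  obtain ⟨t19, u19, e19⟩ := H 1 3 (by omega) (by omega) (by omega)
  obtain ⟨t20, u20, e20⟩ := H 2 3 (by omega) (by omega) (by omega)
  obtain ⟨t21, u21, e21⟩ := H 3 3 (by omega) (by omega) (by omega)
  have F3 : b3 ≤ 3*k := by omega
  clear u19 e19 u20 e20 u21 e21
  -- b2 ≤ b1 + k from d = 1 windows starting just after b1
  obtain ⟨t2, u2, e2⟩ := H (k-4) 1 (by omega) (by omega) (by omega)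
  obtain ⟨t3, u3, e3⟩ := H (k-3) 1 (by omega) (by omega) (by omega)
  obtain ⟨t4, u4, e4⟩ := H (k-2) 1 (by omega) (by omega) (by omega)
  obtain ⟨t5, u5, e5⟩ := H (k-1) 1 (by omega) (by omega) (by omega)
  obtain ⟨t6, u6, e6⟩ := H k 1 (by omega) (by omega) (by omega)
  obtain ⟨t7, u7, e7⟩ := H (k+1) 1 (by omega) (by omega) (by omega)
  have F4 : b2 ≤ b1 + k := by clear F2b; omega
  clear u2 e2 u3 e3 u4 e4 u5 e5 u6 e6 u7 e7
  -- windows just after b2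
  obtain ⟨t8, u8, e8⟩ := H (2*k-4) 1 (by omega) (by omega) (by omega)
  obtain ⟨t9, u9, e9⟩ := H (2*k-3) 1 (by omega) (by omega) (by omega)
  obtain ⟨t10, u10, e10⟩ := H (2*k-2) 1 (by omega) (by omega) (by omega)
  obtain ⟨t11, u11, e11⟩ := H (2*k-1) 1 (by omega) (by omega) (by omega)
  obtain ⟨t12, u12, e12⟩ := H (2*k) 1 (by omega) (by omega) (by omega)
  obtain ⟨t13, u13, e13⟩ := H (2*k+1) 1 (by omega) (by omega) (by omega)
  obtain ⟨t17, u17, e17⟩ := H (2*k-5) 2 (by omega) (by omega) (by omega)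
  obtain ⟨t18, u18, e18⟩ := H (2*k-4) 2 (by omega) (by omega) (by omega)
  rcases le_or_gt b2 (2*k-6) with hb2 | hb2
  · -- then b3 = 3k-5 is forced, but the even d=2 window [2k-4, 4k-6] is unblocked
    have F5 : b3 = 3*k-5 := by clear F2b u17 e17 u18 e18; omega
    clear u8 e8 u9 e9 u10 e10 u11 e11 u12 e12 u13 e13 F2b F4 u17 e17
    omega
  · have F5 : b3 ≤ b2 + k := by omega
    clear u8 e8 u9 e9 u10 e10 u11 e11 u12 e12 u13 e13
    -- parity windows, d = 2
    obtain ⟨t15, u15, e15⟩ := H 1 2 (by omega) (by omega) (by omega)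
    obtain ⟨t16, u16, e16⟩ := H 2 2 (by omega) (by omega) (by omega)
    have P15 : (b1 % 2 = 1 ∧ b1 ≤ 2*k-1) ∨ (b2 % 2 = 1 ∧ b2 ≤ 2*k-1) := by
      clear F2b u16 e16 u17 e17 u18 e18; omega
    have P16 : b1 % 2 = 0 ∨ (b2 % 2 = 0 ∧ b2 ≤ 2*k) := by
      clear F2b u15 e15 P15 u17 e17 u18 e18; omega
    have P17 : b2 % 2 = 1 ∨ b3 % 2 = 1 := by
      clear F2b u15 e15 P15 u16 e16 P16 u18 e18; omega
    have P18 : (b2 % 2 = 0 ∧ 2*k-4 ≤ b2) ∨ b3 % 2 = 0 := by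
      clear F2b u15 e15 P15 u16 e16 P16 u17 e17 P17; omega
    clear H u15 e15 u16 e16 u17 e17 u18 e18
    obtain ⟨f1, hf1, hb1e⟩ : ∃ f, f ≤ 5 ∧ b1 = k-5+f :=
      ⟨b1-(k-5), by clear P15 P16 P17 P18 F2b; omega, by clear P15 P16 P17 P18 F2b; omega⟩
    obtain ⟨f2, hf2, hb2e⟩ : ∃ f, f ≤ 5 ∧ b2 = 2*k-5+f :=
      ⟨b2-(2*k-5), by clear P15 P16 P17 P18 F2b; omega, by clear P15 P16 P17 P18 F2b; omega⟩
    obtain ⟨f3, hf3, hb3e⟩ : ∃ f, f ≤ 5 ∧ b3 = 3*k-5+f :=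
      ⟨b3-(3*k-5), by clear P15 P16 P17 P18 F2b; omega, by clear P15 P16 P17 P18 F2b; omega⟩
    subst hb1e hb2e hb3e
    obtain ⟨m1, m2, m3⟩ := F2b
    have hm1 : (f1+2) % 3 ≠ f2 % 3 := by clear P15 P16 P17 P18 m2 m3; omega
    have hm2 : (f1+2) % 3 ≠ (f3+1) % 3 := by clear P15 P16 P17 P18 m1 m3; omega
    have hm3 : f2 % 3 ≠ (f3+1) % 3 := by clear P15 P16 P17 P18 m1 m2; omega
    have hp15 : f1 % 2 = 0 ∨ (f2 % 2 = 0 ∧ f2 ≤ 4) := by clear P16 P17 P18 m1 m2 m3; omega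
    have hp16 : f1 % 2 = 1 ∨ f2 % 2 = 1 := by clear P15 P17 P18 m1 m2 m3; omega
    have hp17 : f2 % 2 = 0 ∨ f3 % 2 = 0 := by clear P15 P16 P18 m1 m2 m3; omega
    have hp18 : f2 % 2 = 1 ∨ f3 % 2 = 1 := by clear P15 P16 P17 m1 m2 m3; omega
    exact offsets f1 f2 f3 hf1 (by clear P15 P16 P17 P18 m1 m2 m3; omega)
      (by clear P15 P16 P17 P18 m1 m2 m3; omega) hm1 hm2 hm3 hp15 hp16 hp17 hp18

lemma core (k b1 b2 b3 : ℕ) (hk : 10 ≤ k) (hmod : k % 6 = 4)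
    (H : ∀ a d, 1 ≤ a → 1 ≤ d → a + (k-1)*d ≤ 4*k-6 →
      ∃ t, t < k ∧ (a+t*d = b1 ∨ a+t*d = b2 ∨ a+t*d = b3)) : False := by
  have H' : ∀ x y z : ℕ, (x = b1 ∨ x = b2 ∨ x = b3) → (y = b1 ∨ y = b2 ∨ y = b3) →
      (z = b1 ∨ z = b2 ∨ z = b3) → (∀ w, (w = b1 ∨ w = b2 ∨ w = b3) → (w = x ∨ w = y ∨ w = z)) →
      x ≤ y → y ≤ z → False := by
    intro x y z _ _ _ hw hxy hyz
    exact core_sorted k x y z hk hmod hxy hyz (fun a d h1 h2 h3 => by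
      obtain ⟨t, ht, h⟩ := H a d h1 h2 h3
      exact ⟨t, ht, hw _ h⟩)
  rcases le_total b1 b2 with h12 | h12 <;> rcases le_total b2 b3 with h23 | h23 <;>
    rcases le_total b1 b3 with h13 | h13
  · exact H' b1 b2 b3 (by tauto) (by tauto) (by tauto) (by tauto) (by omega) (by omega)
  · exact H' b1 b2 b3 (by tauto) (by tauto) (by tauto) (by tauto) (by omega) (by omega)
  · exact H' b1 b3 b2 (by tauto) (by tauto) (by tauto) (by tauto) (by omega) (by omega)
  · exact H' b3 b1 b2 (by tauto) (by tauto) (by tauto) (by tauto) (by omega) (by omega)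
  · exact H' b2 b1 b3 (by tauto) (by tauto) (by tauto) (by tauto) (by omega) (by omega)
  · exact H' b2 b3 b1 (by tauto) (by tauto) (by tauto) (by tauto) (by omega) (by omega)
  · exact H' b2 b3 b1 (by tauto) (by tauto) (by tauto) (by tauto) (by omega) (by omega)
  · exact H' b3 b2 b1 (by tauto) (by tauto) (by tauto) (by tauto) (by omega) (by omega)

/-- For every `k ≥ 5` with `k ≡ 4 (mod 6)`, `w₂(k;4) = 4k - 6`. -/
theorem w2_four_of_mod_six (k : ℕ) (hk : 5 ≤ k) (hmod : k % 6 = 4) :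
    IsLeast {n : ℕ | 0 < n ∧ vdwProp 4 (twoColors k) n} (4 * k - 6) := by
  have hk10 : 10 ≤ k := by omega
  constructor
  · -- membership: 4k-6 works
    refine ⟨by omega, ?_⟩
    intro χ hχ
    by_contra hcon
    push_neg at hcon
    -- no two distinct points share a nonzero color
    have huniq : ∀ x y, 1 ≤ x → x < y → y ≤ 4*k-6 → χ x ≠ 0 → χ x = χ y → False := by
      intro x y hx hxy hy hx0 hxy2
      have hi : χ x < 4 := hχ x hx (by omega)
      have h2 : twoColors k (χ x) = 2 := by simp [twoColors, hx0]
      obtain ⟨t, ht, hne⟩ := hcon (χ x) hi x hx (y - x) (by omega)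
        (by rw [h2]; omega)
      rw [h2] at ht
      interval_cases t
      · simp at hne
      · apply hne
        have h1 : x + 1 * (y - x) = y := by omega
        rw [h1, hxy2]
    have huniq' : ∀ x y, 1 ≤ x → x ≤ 4*k-6 → 1 ≤ y → y ≤ 4*k-6 → χ x = χ y → χ x ≠ 0 → x = y := by
      intro x y hx1 hx2 hy1 hy2 he h0
      rcases lt_trichotomy x y with h | h | h
      · exact absurd (huniq x y hx1 h hy2 h0 he) not_false
      · exact h
      · exact absurd (huniq y x hy1 h hx2 (he ▸ h0) he.symm) not_false
    have key : ∀ i : ℕ, ∃ b, ∀ x, 1 ≤ x → x ≤ 4*k-6 → χ x = i → i ≠ 0 → x = b := by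
      intro i
      by_cases h : ∃ x, 1 ≤ x ∧ x ≤ 4*k-6 ∧ χ x = i
      · obtain ⟨b, hb1, hb2, hb3⟩ := h
        exact ⟨b, fun x hx1 hx2 hχx hi =>
          huniq' x b hx1 hx2 hb1 hb2 (by rw [hχx, hb3]) (by rw [hχx]; exact hi)⟩
      · exact ⟨0, fun x hx1 hx2 hχx _ => absurd ⟨x, hx1, hx2, hχx⟩ h⟩
    obtain ⟨b1, hb1⟩ := key 1
    obtain ⟨b2, hb2⟩ := key 2
    obtain ⟨b3, hb3⟩ := key 3
    have hbad : ∀ x, 1 ≤ x → x ≤ 4*k-6 → χ x ≠ 0 → x = b1 ∨ x = b2 ∨ x = b3 := by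
      intro x hx1 hx2 h0
      have h4 : χ x < 4 := hχ x hx1 hx2
      have h123 : χ x = 1 ∨ χ x = 2 ∨ χ x = 3 := by omega
      rcases h123 with h | h | h
      · exact Or.inl (hb1 x hx1 hx2 h (by omega))
      · exact Or.inr (Or.inl (hb2 x hx1 hx2 h (by omega)))
      · exact Or.inr (Or.inr (hb3 x hx1 hx2 h (by omega)))
    refine core k b1 b2 b3 hk10 hmod ?_
    intro a d ha hd hle
    have h0 : twoColors k 0 = k := by simp [twoColors]
    obtain ⟨t, ht, hne⟩ := hcon 0 (by norm_num) a ha d hd (by rw [h0]; omega)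
    rw [h0] at ht
    have hmul : t * d ≤ (k-1) * d := Nat.mul_le_mul_right d (by omega)
    exact ⟨t, ht, hbad (a + t*d) (by omega) (by omega) hne⟩
  · -- lower bound: every good n is at least 4k-6
    rintro n ⟨hn, hvdw⟩
    by_contra hlt
    push_neg at hlt
    set χ : ℕ → ℕ := fun x => if x = k then 1 else if x = 2*k-3 then 2 else
      if x = 3*k-6 then 3 else 0 with hχdef
    have hχval : ∀ x, χ x < 4 := by
      intro x
      simp only [hχdef]
      split_ifs <;> omega
    obtain ⟨i, hi, a, ha, d, hd, hle, hmono⟩ := hvdw χ (fun x _ _ => hχval x)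
    have hev : ∀ x, χ x ≠ 0 → x = k ∨ x = 2*k-3 ∨ x = 3*k-6 := by
      intro x hx
      simp only [hχdef] at hx
      split_ifs at hx with h1 h2 h3 <;> tauto
    have hev1 : χ k = 1 := by simp [hχdef]
    have hev2 : χ (2*k-3) = 2 := by
      have h1 : 2*k-3 ≠ k := by omega
      simp [hχdef, h1]
    have hev3 : χ (3*k-6) = 3 := by
      have h1 : 3*k-6 ≠ k := by omega
      have h2 : 3*k-6 ≠ 2*k-3 := by omega
      simp [hχdef, h1, h2]
    by_cases hi0 : i = 0
    · -- a k-term AP avoiding the three blockers: impossible in [1, 4k-7]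
      subst hi0
      have h0 : twoColors k 0 = k := by simp [twoColors]
      rw [h0] at hle hmono
      have hled : a + (k-1)*d ≤ 4*k-7 := by omega
      have hd3 : d ≤ 3 := by
        by_contra hd4
        have h4 : (k-1) * 4 ≤ (k-1) * d := Nat.mul_le_mul_left (k-1) (by omega)
        omega
      -- find a blocker inside the progression
      have hblock : ∃ t, t < k ∧ (a + t*d = k ∨ a + t*d = 2*k-3 ∨ a + t*d = 3*k-6) := by
        interval_cases d
        · -- d = 1
          rcases le_or_gt a k with h | h
          · exact ⟨k - a, by omega, Or.inl (by omega)⟩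
          · rcases le_or_gt a (2*k-3) with h' | h'
            · exact ⟨2*k-3 - a, by omega, Or.inr (Or.inl (by omega))⟩
            · exact ⟨3*k-6 - a, by omega, Or.inr (Or.inr (by omega))⟩
        · -- d = 2
          rcases Nat.even_or_odd a with h | h
          · rw [Nat.even_iff] at h
            rcases le_or_gt a k with h' | h'
            · exact ⟨(k - a)/2, by omega, Or.inl (by omega)⟩
            · exact ⟨(3*k-6 - a)/2, by omega, Or.inr (Or.inr (by omega))⟩
          · rw [Nat.odd_iff] at h
            exact ⟨(2*k-3 - a)/2, by omega, Or.inr (Or.inl (by omega))⟩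
        · -- d = 3
          have h3 : a % 3 = 0 ∨ a % 3 = 1 ∨ a % 3 = 2 := by omega
          rcases h3 with h | h | h
          · exact ⟨(3*k-6 - a)/3, by omega, Or.inr (Or.inr (by omega))⟩
          · exact ⟨(k - a)/3, by omega, Or.inl (by omega)⟩
          · exact ⟨(2*k-3 - a)/3, by omega, Or.inr (Or.inl (by omega))⟩
      obtain ⟨t, ht, hb⟩ := hblock
      have hmt := hmono t ht
      rcases hb with h | h | h <;> rw [h] at hmt
      · rw [hev1] at hmt; omega
      · rw [hev2] at hmt; omega
      · rw [hev3] at hmt; omega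
    · -- a 2-term AP in a nonzero color: two distinct points of the same color
      have h2 : twoColors k i = 2 := by simp [twoColors, hi0]
      rw [h2] at hle hmono
      have e0 : χ a = i := by have hmt := hmono 0 (by omega); simpa using hmt
      have e1 : χ (a + d) = i := by
        have hmt := hmono 1 (by omega); rw [one_mul] at hmt; exact hmt
      have ha0 : χ a ≠ 0 := by omega
      have ha1 : χ (a+d) ≠ 0 := by omega
      have c0 := hev a ha0
      have c1 := hev (a+d) ha1
      rcases c0 with h | h | h <;> rcases c1 with h' | h' | h' <;>
        rw [h] at e0 <;> rw [h'] at e1 <;> omega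
end
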